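/- arXiv:math/0107052 — 3 statements merged into one kernel-verified Lean document; each statement's English description precedes it below -/
import Mathlib

section
/- Let Δ be a multisegment listed in right order as (a₁,b₁), …, (a_m,b_m), and fix j ∈ ℤ. Assign to segment k a '−' if b_k = j, a '+' if b_k = j−1, and a blank otherwise; apply signature cancellation. If there is an uncanceled '−', coming from segment (a_s, j), define E_j(Δ) = Δ ∪ {(a_s, j−1)} ∖ {(a_s, j)} (deleting the segment entirely if a_s = j, i.e., replacing it with the empty segment convention). Then E_j(Δ), when nonzero, is again a multisegment, and applying E_j strictly decreases the total size n(Δ) = Σ (b_k − a_k + 1) by exactly 1. -/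
/-- Weak right order on segments `(i,j)` (`i ≤ j`): `s ⩾ t` iff `s.1 > t.1`, or
`s.1 = t.1` and `s.2 ≤ t.2`. -/
def rGE (s t : ℤ × ℤ) : Prop := t.1 < s.1 ∨ (s.1 = t.1 ∧ s.2 ≤ t.2)

instance : DecidableRel rGE := fun _ _ => by unfold rGE; infer_instance

/-- Signature reduction for the `j`-signature of a list of segments (in right order):
a segment ending in `j` is a `-`, a segment ending in `j-1` is a `+`, all others are blank;
adjacent `-+` pairs cancel.  Returns the list of segments carrying uncanceled symbols,
which has the form `+ ⋯ + - ⋯ -`. -/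
def redSeg (j : ℤ) : List (ℤ × ℤ) → List (ℤ × ℤ)
  | [] => []
  | s :: xs =>
    let r := redSeg j xs
    if s.2 = j then
      match r with
      | t :: r' => if t.2 = j - 1 then r' else s :: r
      | [] => [s]
    else if s.2 = j - 1 then s :: r
    else r

/-- `n(Δ)`: the total number of boxes of a multisegment. -/
def nOf (Δ : List (ℤ × ℤ)) : ℤ := (Δ.map (fun s => s.2 - s.1 + 1)).sum

/-- The crystal operator `E_j` on a multisegment listed in right order: replace the segment
`(a, j)` carrying the leftmost uncanceled `-` by `(a, j-1)` (deleting it if `a = j`),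
or return `none` if there is no uncanceled `-`. -/
def Ej (j : ℤ) (Δ : List (ℤ × ℤ)) : Option (List (ℤ × ℤ)) :=
  match (redSeg j Δ).find? (fun s => s.2 == j) with
  | none => none
  | some s => some ((Δ.erase s) ++ (if s.1 ≤ j - 1 then [(s.1, j - 1)] else []))

/-- Sort a multisegment into right order. -/
def rsort (Δ : List (ℤ × ℤ)) : List (ℤ × ℤ) :=
  Δ.mergeSort (fun s t => decide (rGE s t))

/-- `ε_j(Δ)`: the number of uncanceled `-` symbols of the `j`-signature of `Δ` in right order. -/
def epsj (j : ℤ) (Δ : List (ℤ × ℤ)) : ℕ :=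
  ((redSeg j (rsort Δ)).filter (fun s => s.2 == j)).length

/-- `E_j` applied to a multisegment (first putting it into right order). -/
def Ejm (j : ℤ) (Δ : List (ℤ × ℤ)) : Option (List (ℤ × ℤ)) := Ej j (rsort Δ)

/-- Iterates of `E_j`; `none` is the formal symbol `0`. -/
def EjPow (j : ℤ) : ℕ → List (ℤ × ℤ) → Option (List (ℤ × ℤ))
  | 0, Δ => some Δ
  | n + 1, Δ => (EjPow j n Δ).bind (Ejm j)

theorem redSeg_sublist (j : ℤ) : ∀ l : List (ℤ × ℤ), (redSeg j l).Sublist l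
  | [] => .slnil
  | s :: xs => by
    have ih := redSeg_sublist j xs
    rw [redSeg]
    split_ifs
    · split
      · rename_i t r' hr
        split_ifs
        · exact ((List.sublist_cons_self t r').trans (hr ▸ ih)).cons s
        · exact ih.cons_cons s
      · exact (List.nil_sublist xs).cons_cons s
    · exact ih.cons_cons s
    · exact ih.cons s

theorem exists_of_Ej_eq_some {j : ℤ} {Δ Δ' : List (ℤ × ℤ)} (h : Ej j Δ = some Δ') :
    ∃ s ∈ Δ, s.2 = j ∧ Δ' = Δ.erase s ++ (if s.1 ≤ j - 1 then [(s.1, j - 1)] else []) := by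
  unfold Ej at h
  split at h
  · cases h
  · rename_i s hs
    cases h
    exact ⟨s, (redSeg_sublist j Δ).mem (List.mem_of_find?_eq_some hs),
      by simpa using List.find?_some hs, rfl⟩

theorem nOf_append (l₁ l₂ : List (ℤ × ℤ)) : nOf (l₁ ++ l₂) = nOf l₁ + nOf l₂ := by
  simp [nOf]

theorem nOf_erase {l : List (ℤ × ℤ)} {s : ℤ × ℤ} (hs : s ∈ l) :
    nOf (l.erase s) = nOf l - (s.2 - s.1 + 1) := by
  have := ((List.perm_cons_erase hs).map fun t : ℤ × ℤ => t.2 - t.1 + 1).sum_eq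
  simp only [nOf, List.map_cons, List.sum_cons] at this ⊢
  omega

theorem stmt7_general (j : ℤ) (Δ : List (ℤ × ℤ)) (hseg : ∀ s ∈ Δ, s.1 ≤ s.2)
    (Δ' : List (ℤ × ℤ)) (h : Ej j Δ = some Δ') :
    (∀ s ∈ Δ', s.1 ≤ s.2) ∧ nOf Δ' = nOf Δ - 1 := by
  obtain ⟨s, hsΔ, rfl, rfl⟩ := exists_of_Ej_eq_some h
  have hs := hseg s hsΔ
  refine ⟨fun t ht => ?_, ?_⟩
  · rcases List.mem_append.mp ht with ht | ht
    · exact hseg t (List.erase_sublist.mem ht)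
    · split_ifs at ht with hle
      · obtain rfl := List.mem_singleton.mp ht
        exact hle
      · simp at ht
  · rw [nOf_append, nOf_erase hsΔ]
    split_ifs with hle
    · simp only [nOf, List.map_cons, List.map_nil, List.sum_cons, List.sum_nil]
      omega
    · simp only [nOf, List.map_nil, List.sum_nil]
      omega

/-- For a multisegment `Δ` listed in right order, if the `j`-signature has an uncanceled
`-`, then `E_j Δ` (replacing the segment `(a, j)` of the leftmost uncanceled `-` by
`(a, j-1)`, deleting it if `a = j`) is again a multisegment, and the total size
`n(Δ) = Σ (b_k - a_k + 1)` decreases by exactly `1`. -/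
theorem stmt7 (j : ℤ) (Δ : List (ℤ × ℤ)) (hseg : ∀ s ∈ Δ, s.1 ≤ s.2)
    (hsort : Δ.Pairwise rGE) (Δ' : List (ℤ × ℤ)) (h : Ej j Δ = some Δ') :
    (∀ s ∈ Δ', s.1 ≤ s.2) ∧ nOf Δ' = nOf Δ - 1 :=
  stmt7_general j Δ hseg Δ' h
end

section
/- Let ε_j(Δ) denote the number of uncanceled − symbols in the j-signature of the multisegment Δ in right order. If E_j(Δ) ≠ 0 then ε_j(E_j(Δ)) = ε_j(Δ) − 1, and E_j^{ε_j(Δ)+1}(Δ) = 0. -/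
lemma rGE_antisymm {s t : ℤ × ℤ} (hst : rGE s t) (hts : rGE t s) : s = t := by
  obtain ⟨a, b⟩ := s
  obtain ⟨c, d⟩ := t
  simp only [rGE, Prod.mk.injEq] at *
  omega

lemma rsort_pairwise (Δ : List (ℤ × ℤ)) : (rsort Δ).Pairwise rGE := by
  have h := List.pairwise_mergeSort (le := fun s t => decide (rGE s t))
    (fun _ _ _ => by simp only [decide_eq_true_eq]; unfold rGE; omega)
    (fun _ _ => by simp only [Bool.or_eq_true, decide_eq_true_eq]; unfold rGE; omega) Δ
  simpa [rsort] using h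

lemma rsort_eq_of_perm {Δ K : List (ℤ × ℤ)} (hK : K.Pairwise rGE) (hΔ : Δ.Perm K) :
    rsort Δ = K :=
  ((List.mergeSort_perm Δ _).trans hΔ).eq_of_pairwise (fun _ _ _ _ => rGE_antisymm)
    (rsort_pairwise Δ) hK

lemma pairwise_rGE_append_cons_pred {A B : List (ℤ × ℤ)} {s : ℤ × ℤ}
    (h : (A ++ s :: B).Pairwise rGE) (hsA : s ∉ A) :
    (A ++ (s.1, s.2 - 1) :: B).Pairwise rGE := by
  obtain ⟨hA, hsB, hAsB⟩ := List.pairwise_append.1 h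
  obtain ⟨hs, hB⟩ := List.pairwise_cons.1 hsB
  refine List.pairwise_append.2 ⟨hA, List.pairwise_cons.2 ⟨fun y hy => ?_, hB⟩, ?_⟩
  · have := hs y hy
    simp only [rGE] at this ⊢
    omega
  · intro x hx y hy
    rcases List.mem_cons.1 hy with rfl | hy
    · have hxs := hAsB x hx s List.mem_cons_self
      have hne : x ≠ s := fun hxs => hsA (hxs ▸ hx)
      obtain ⟨a, b⟩ := x
      simp only [rGE, ne_eq, Prod.ext_iff] at hxs hne ⊢
      omega
    · exact hAsB x hx y (List.mem_cons_of_mem _ hy)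

lemma eq_nil_of_pairwise_rGE_cons_append_cons {A B : List (ℤ × ℤ)} {s : ℤ × ℤ}
    (h : (s :: (A ++ s :: B)).Pairwise rGE) (hsA : s ∉ A) : A = [] := by
  refine List.eq_nil_iff_forall_not_mem.2 fun x hx => hsA ?_
  have hsx : rGE s x := List.rel_of_pairwise_cons h (by simp [hx])
  have hxs : rGE x s := (List.pairwise_append.1 h.of_cons).2.2 x hx s List.mem_cons_self
  exact rGE_antisymm hsx hxs ▸ hx

section Signature

variable {j : ℤ}

lemma redSeg_cons_of_snd_eq_sub_one {s : ℤ × ℤ} (hs : s.2 = j - 1) (xs : List (ℤ × ℤ)) :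
    redSeg j (s :: xs) = s :: redSeg j xs := by
  simp [redSeg, hs]

lemma redSeg_append {A : List (ℤ × ℤ)} (hA : ∀ x ∈ redSeg j A, x.2 ≠ j) (Y : List (ℤ × ℤ)) :
    redSeg j (A ++ Y) = redSeg j A ++ redSeg j Y := by
  induction A with
  | nil => rfl
  | cons a A ih =>
    by_cases ha : a.2 = j
    · rcases hr : redSeg j A with _ | ⟨u, r⟩
      · simp [redSeg, ha, hr] at hA
      · by_cases hu : u.2 = j - 1
        · have hA' : ∀ x ∈ redSeg j A, x.2 ≠ j := by
            simp only [redSeg, ha, hr, hu, if_true] at hA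
            simp only [hr, List.mem_cons, forall_eq_or_imp, hu]
            exact ⟨by omega, hA⟩
          simp [redSeg, ha, ih hA', hr, hu]
        · simp [redSeg, ha, hr, hu] at hA
    · by_cases ha' : a.2 = j - 1
      · rw [redSeg_cons_of_snd_eq_sub_one ha'] at hA
        rw [List.cons_append, redSeg_cons_of_snd_eq_sub_one ha',
          redSeg_cons_of_snd_eq_sub_one ha', ih (fun x hx => hA x (List.mem_cons_of_mem _ hx))]
        rfl
      · simp only [redSeg, ha, ha', if_false] at hA
        simp [redSeg, ha, ha', ih hA]

lemma redSeg_cons_sublist (t : ℤ × ℤ) (xs : List (ℤ × ℤ)) :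
    (redSeg j (t :: xs)).Sublist (t :: redSeg j xs) := by
  simp only [redSeg]
  split_ifs
  · split
    · split_ifs <;> simp_all [List.Sublist.cons]
    · simp_all
  · rfl
  · exact List.sublist_cons_self _ _

lemma find?_redSeg_cons_of_snd_ne {t : ℤ × ℤ} (ht : t.2 ≠ j) (xs : List (ℤ × ℤ)) :
    (redSeg j (t :: xs)).find? (fun x => x.2 == j) = (redSeg j xs).find? (fun x => x.2 == j) := by
  by_cases ht' : t.2 = j - 1 <;> simp [redSeg, ht, ht']

lemma exists_eq_append_cons_of_find?_redSeg {L : List (ℤ × ℤ)} (hL : L.Pairwise rGE)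
    {s : ℤ × ℤ} (hs : (redSeg j L).find? (fun x => x.2 == j) = some s) :
    ∃ A B, L = A ++ s :: B ∧ s ∉ A ∧ (∀ x ∈ redSeg j A, x.2 ≠ j) ∧
      redSeg j (s :: B) = s :: redSeg j B := by
  induction L with
  | nil => simp [redSeg] at hs
  | cons t xs ih =>
    have hsj : s.2 = j := by simpa using List.find?_some hs
    by_cases htj : t.2 = j
    swap
    · obtain ⟨A, B, rfl, hsA, hA, hB⟩ := ih hL.of_cons (find?_redSeg_cons_of_snd_ne htj xs ▸ hs)
      refine ⟨t :: A, B, rfl, ?_, fun x hx => ?_, hB⟩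
      · rintro (_ | ⟨_, hsA'⟩)
        · exact htj hsj
        · exact hsA hsA'
      · rcases List.mem_cons.1 ((redSeg_cons_sublist t A).subset hx) with rfl | hx
        · exact htj
        · exact hA x hx
    by_cases hcancel : ∃ u r, redSeg j xs = u :: r ∧ u.2 = j - 1
    · obtain ⟨u, r, hr, hu⟩ := hcancel
      have hfind : (redSeg j xs).find? (fun x => x.2 == j) = some s := by
        simpa [redSeg, htj, hr, hu] using hs
      obtain ⟨A, B, rfl, hsA, hA, hB⟩ := ih hL.of_cons hfind
      rw [redSeg_append hA, hB] at hr
      obtain ⟨r₀, hrA⟩ : ∃ r₀, redSeg j A = u :: r₀ := by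
        rcases hrA : redSeg j A with _ | ⟨v, r₀⟩
        · obtain ⟨rfl, -⟩ := List.cons.inj (hrA ▸ hr)
          omega
        · simp_all
      refine ⟨t :: A, B, rfl, ?_, ?_, hB⟩
      · rintro (_ | ⟨_, hsA'⟩)
        · simp [eq_nil_of_pairwise_rGE_cons_append_cons hL hsA, redSeg] at hrA
        · exact hsA hsA'
      · have : redSeg j (t :: A) = r₀ := by simp [redSeg, htj, hrA, hu]
        exact this ▸ fun x hx => hA x (by simp [hrA, hx])
    · have hkeep : redSeg j (t :: xs) = t :: redSeg j xs := by
        push Not at hcancel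
        rcases hr : redSeg j xs with _ | ⟨u, r⟩ <;> simp [redSeg, htj, hr, hcancel]
      obtain rfl : t = s := by simpa [hkeep, htj] using hs
      exact ⟨[], xs, rfl, by simp, by simp [redSeg], hkeep⟩

lemma filter_redSeg_append {A : List (ℤ × ℤ)} (hA : ∀ x ∈ redSeg j A, x.2 ≠ j)
    (Y : List (ℤ × ℤ)) :
    (redSeg j (A ++ Y)).filter (fun x => x.2 == j) = (redSeg j Y).filter (fun x => x.2 == j) := by
  rw [redSeg_append hA, List.filter_append, List.filter_eq_nil_iff.2 (by simpa using hA),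
    List.nil_append]

lemma epsj_add_one_of_Ejm_eq_some {Δ Δ' : List (ℤ × ℤ)} (h : Ejm j Δ = some Δ') :
    epsj j Δ' + 1 = epsj j Δ := by
  unfold Ejm Ej at h
  split at h
  · contradiction
  rename_i s hfind
  have hsj : s.2 = j := by simpa using List.find?_some hfind
  obtain ⟨A, B, hL, hsA, hA, hB⟩ :=
    exists_eq_append_cons_of_find?_redSeg (rsort_pairwise Δ) hfind
  have hsorted : (A ++ s :: B).Pairwise rGE := hL ▸ rsort_pairwise Δ
  have hepsΔ : epsj j Δ = ((redSeg j B).filter (fun x => x.2 == j)).length + 1 := by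
    rw [epsj, hL, filter_redSeg_append hA, hB, List.filter_cons_of_pos (by simpa using hsj),
      List.length_cons]
  have herase : (rsort Δ).erase s = A ++ B := by
    rw [hL, List.erase_append_right _ hsA, List.erase_cons_head]
  simp only [Option.some.injEq, herase] at h
  subst h
  split_ifs with ha
  · have hrs : rsort (A ++ B ++ [(s.1, j - 1)]) = A ++ (s.1, j - 1) :: B := by
      refine rsort_eq_of_perm (hsj ▸ pairwise_rGE_append_cons_pred hsorted hsA) ?_
      rw [List.append_assoc]
      exact (List.perm_append_singleton _ _).append_left A
    rw [epsj, hrs, filter_redSeg_append hA, redSeg_cons_of_snd_eq_sub_one rfl,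
      List.filter_cons_of_neg (by simp), hepsΔ]
  · have hrs : rsort (A ++ B ++ []) = A ++ B :=
      rsort_eq_of_perm (hsorted.sublist (by simp)) (by simp)
    rw [epsj, hrs, filter_redSeg_append hA, hepsΔ]

lemma Ejm_eq_none_of_epsj_eq_zero {Δ : List (ℤ × ℤ)} (h : epsj j Δ = 0) :
    Ejm j Δ = none := by
  have hfind : (redSeg j (rsort Δ)).find? (fun x => x.2 == j) = none :=
    List.find?_eq_none.2 (List.filter_eq_nil_iff.1 (List.length_eq_zero_iff.1 h))
  simp [Ejm, Ej, hfind]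

lemma epsj_add_of_EjPow_eq_some {Δ : List (ℤ × ℤ)} :
    ∀ {n : ℕ} {Γ : List (ℤ × ℤ)}, EjPow j n Δ = some Γ → epsj j Γ + n = epsj j Δ
  | 0, Γ, h => by simp_all [EjPow]
  | n + 1, Γ, h => by
    obtain ⟨Γ₀, h₀, hΓ⟩ := Option.bind_eq_some_iff.1 h
    have := epsj_add_one_of_Ejm_eq_some hΓ
    have := epsj_add_of_EjPow_eq_some h₀
    omega

lemma EjPow_epsj_add_one_eq_none (Δ : List (ℤ × ℤ)) : EjPow j (epsj j Δ + 1) Δ = none := by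
  rw [EjPow, Option.bind_eq_none_iff]
  intro Γ hΓ
  exact Ejm_eq_none_of_epsj_eq_zero (by have := epsj_add_of_EjPow_eq_some hΓ; omega)

end Signature

theorem stmt8_general (j : ℤ) (Δ Δ' : List (ℤ × ℤ))
    (h : Ejm j Δ = some Δ') :
    epsj j Δ' = epsj j Δ - 1 ∧ EjPow j (epsj j Δ + 1) Δ = none := by
  have := epsj_add_one_of_Ejm_eq_some h
  exact ⟨by omega, EjPow_epsj_add_one_eq_none Δ⟩

/-- If `E_j Δ ≠ 0` then `ε_j(E_j Δ) = ε_j(Δ) - 1`, and `E_j^{ε_j(Δ)+1} Δ = 0`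
(where `ε_j` counts the uncanceled `-` symbols of the `j`-signature in right order). -/
theorem stmt8 (j : ℤ) (Δ Δ' : List (ℤ × ℤ)) (hseg : ∀ s ∈ Δ, s.1 ≤ s.2)
    (h : Ejm j Δ = some Δ') :
    epsj j Δ' = epsj j Δ - 1 ∧ EjPow j (epsj j Δ + 1) Δ = none :=
  stmt8_general j Δ Δ' h
end

section
/- The map (μ^{(1)}, …, μ^{(r)}) ↦ Δ(μ^{(1)}, i₁) ∪ ⋯ ∪ Δ(μ^{(r)}, i_r) (union of multisets) is injective on Kleshchev multipartitions colored by λ = Λ_{i₁} + ⋯ + Λ_{i_r} with i₁ ≥ ⋯ ≥ i_r. -/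
/-- A partition: a weakly decreasing list of positive integers. -/
def IsPartition (μ : List ℕ) : Prop :=
  μ.Pairwise (· ≥ ·) ∧ ∀ x ∈ μ, 0 < x

/-- Remove one box from row `m` (0-indexed), deleting the row if it becomes empty. -/
def removeBox (μ : List ℕ) (m : ℕ) : List ℕ :=
  (μ.set m (μ.getD m 0 - 1)).filter (fun x => decide (0 < x))

/-- The box at the end of row `m` (0-indexed) of `μ` colored by `i` is a removable `j`-box:
it is filled with `j` (the `(x,y)` box is filled with `i + x - y`, rows and columns 1-indexed),
and removing it yields the diagram of a partition. -/
def RemovableJBox (μ : List ℕ) (i j : ℤ) (m : ℕ) : Prop :=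
  m < μ.length ∧ i + (μ.getD m 0 : ℤ) - (m + 1 : ℕ) = j ∧ IsPartition (removeBox μ m)

/-- Add a box at the end of row `m` (0-indexed); `m = μ.length` starts a new row. -/
def addBox (μ : List ℕ) (m : ℕ) : List ℕ :=
  if m < μ.length then μ.set m (μ.getD m 0 + 1) else μ ++ [1]

/-- The position at the end of row `m` is an addable `j`-box: the added box would be filled
with `j` and adding it yields the diagram of a partition. -/
def AddableJBox (μ : List ℕ) (i j : ℤ) (m : ℕ) : Prop :=
  m ≤ μ.length ∧ i + ((μ.getD m 0 : ℤ) + 1) - (m + 1 : ℕ) = j ∧ IsPartition (addBox μ m)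
/-- The multisegment `Δ(μ, i)` of a partition `μ` colored by `i`, listed in right order:
row `m` (1-indexed) gives the segment `(i - m + 1, i - m + μ_m)`. -/
def deltaList (μ : List ℕ) (i : ℤ) : List (ℤ × ℤ) :=
  (μ.zipIdx.map Prod.swap).map (fun p => ((i - (p.1 : ℤ)), (i - (p.1 : ℤ) + (p.2 : ℤ) - 1)))

def Kleshchev (is : List ℤ) (μs : List (List ℕ)) : Prop :=
  ∀ t : ℕ, t + 1 < μs.length → ∀ x : ℕ,
    (μs.getD t []).getD ((is.getD t 0 - is.getD (t + 1) 0).toNat + x) 0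
      ≤ (μs.getD (t + 1) []).getD x 0

/-- The multisegment `Δ(μ^{(1)}, i₁) ∪ ⋯ ∪ Δ(μ^{(r)}, i_r)` of a colored multipartition. -/
def DeltaMP (is : List ℤ) (μs : List (List ℕ)) : Multiset (ℤ × ℤ) :=
  ((μs.zip is).map (fun p => (deltaList p.1 p.2 : Multiset (ℤ × ℤ)))).sum

/-! Row `m` of a partition `μ` colored by `i` is the only segment of `Δ(μ, i)` beginning at
`i - m`. For contents `b ≤ i_{t+1}`, the Kleshchev condition says that the segment of
`Δ(μ^{(t)}, i_t)` beginning at `b` is no longer than that of `Δ(μ^{(t+1)}, i_{t+1})`, and this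
comparison is transitive. So in the union the longest segment beginning at `i_r - m` is row `m`
of `μ^{(r)}`: the last component is read off from the union, and removing `Δ(μ^{(r)}, i_r)` the
rest follows by induction. -/

namespace Multisegment

def segLength (s : ℤ × ℤ) : ℕ := (s.2 - s.1 + 1).toNat

def maxLengthFrom (M : Multiset (ℤ × ℤ)) (b : ℤ) : ℕ :=
  ((M.filter (·.1 = b)).map segLength).sup

@[simp]
lemma maxLengthFrom_zero (b : ℤ) : maxLengthFrom 0 b = 0 := rfl

@[simp]
lemma maxLengthFrom_add (M N : Multiset (ℤ × ℤ)) (b : ℤ) :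
    maxLengthFrom (M + N) b = maxLengthFrom M b ⊔ maxLengthFrom N b := by
  simp [maxLengthFrom, Multiset.filter_add, Multiset.map_add, Multiset.sup_add]

lemma maxLengthFrom_cons (s : ℤ × ℤ) (M : Multiset (ℤ × ℤ)) (b : ℤ) :
    maxLengthFrom (s ::ₘ M) b = (if s.1 = b then segLength s else 0) ⊔ maxLengthFrom M b := by
  rw [← Multiset.singleton_add, maxLengthFrom_add]
  split_ifs with h <;> simp [maxLengthFrom, Multiset.filter_singleton, h]

lemma maxLengthFrom_sum_le {L : List (Multiset (ℤ × ℤ))} {b : ℤ} {c : ℕ}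
    (h : ∀ M ∈ L, maxLengthFrom M b ≤ c) : maxLengthFrom L.sum b ≤ c := by
  induction L with
  | nil => simp
  | cons M L ih => simp_all

lemma deltaList_cons (x : ℕ) (μ : List ℕ) (i : ℤ) :
    deltaList (x :: μ) i = (i, i + x - 1) :: deltaList μ (i - 1) := by
  simp only [deltaList, List.zipIdx_cons, List.zipIdx_succ, List.map_cons, List.map_map]
  congr 1
  · simp
  · refine List.map_congr_left fun p _ => ?_
    simp only [Function.comp_apply, Prod.fst_swap, Prod.snd_swap, Nat.cast_add, Nat.cast_one]
    ext <;> ring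

lemma maxLengthFrom_deltaList (μ : List ℕ) (i b : ℤ) :
    maxLengthFrom (deltaList μ i) b = if b ≤ i then μ.getD (i - b).toNat 0 else 0 := by
  induction μ generalizing i with
  | nil => simp [deltaList, maxLengthFrom]
  | cons x μ ih =>
    rw [deltaList_cons, ← Multiset.cons_coe, maxLengthFrom_cons, ih]
    rcases lt_trichotomy b i with hb | rfl | hb
    · obtain ⟨k, hk⟩ : ∃ k : ℕ, i - b = k + 1 := ⟨(i - b - 1).toNat, by omega⟩
      simp [hb.ne', hb.le, show b ≤ i - 1 by omega, hk, show i - 1 - b = k by omega]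
    · simp [segLength, show b + x - 1 - b + 1 = x by ring]
    · simp [hb.ne, hb.not_ge, show ¬ b ≤ i - 1 by omega]

lemma eq_of_getD_eq {μ ν : List ℕ} (hμ : ∀ x ∈ μ, 0 < x) (hν : ∀ x ∈ ν, 0 < x)
    (h : ∀ m, μ.getD m 0 = ν.getD m 0) : μ = ν := by
  induction μ generalizing ν with
  | nil =>
    cases ν with
    | nil => rfl
    | cons y ν => simpa [(hν y (by simp)).ne] using h 0
  | cons x μ ih =>
    cases ν with
    | nil => simpa [(hμ x (by simp)).ne'] using h 0
    | cons y ν =>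
      simp only [List.mem_cons, forall_eq_or_imp] at hμ hν
      rw [show x = y by simpa using h 0, ih hμ.2 hν.2 fun m => by simpa using h (m + 1)]

def deltaSum (L : List (List ℕ × ℤ)) : Multiset (ℤ × ℤ) :=
  (L.map fun p => (deltaList p.1 p.2 : Multiset (ℤ × ℤ))).sum

@[simp]
lemma deltaSum_reverse (L : List (List ℕ × ℤ)) : deltaSum L.reverse = deltaSum L := by
  simp [deltaSum, List.sum_reverse]

/-- The Kleshchev condition between consecutive components, restated so that it is transitive. -/
def SegmentsLE (p q : List ℕ × ℤ) : Prop :=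
  q.2 ≤ p.2 ∧ ∀ b ≤ q.2, maxLengthFrom (deltaList p.1 p.2) b ≤ maxLengthFrom (deltaList q.1 q.2) b

lemma SegmentsLE.trans {p q r : List ℕ × ℤ} (hpq : SegmentsLE p q) (hqr : SegmentsLE q r) :
    SegmentsLE p r :=
  ⟨hqr.1.trans hpq.1, fun b hb => (hpq.2 b (hb.trans hqr.1)).trans (hqr.2 b hb)⟩

instance : Trans SegmentsLE SegmentsLE SegmentsLE := ⟨SegmentsLE.trans⟩

lemma maxLengthFrom_deltaSum_cons {q : List ℕ × ℤ} {L : List (List ℕ × ℤ)}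
    (hL : ∀ p ∈ L, SegmentsLE p q) (m : ℕ) :
    maxLengthFrom (deltaSum (q :: L)) (q.2 - m) = q.1.getD m 0 := by
  have hq : maxLengthFrom (deltaList q.1 q.2) (q.2 - m) = q.1.getD m 0 := by
    simp [maxLengthFrom_deltaList]
  have hrest : maxLengthFrom (deltaSum L) (q.2 - m) ≤ q.1.getD m 0 :=
    maxLengthFrom_sum_le fun M hM => by
      obtain ⟨p, hp, rfl⟩ := List.mem_map.mp hM
      exact hq ▸ (hL p hp).2 (q.2 - m) (by omega)
  rw [deltaSum, List.map_cons, List.sum_cons, maxLengthFrom_add, ← deltaSum, hq]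
  exact sup_eq_left.mpr hrest

lemma eq_of_deltaSum_eq {L L' : List (List ℕ × ℤ)} (hsnd : L.map Prod.snd = L'.map Prod.snd)
    (hL : L.Pairwise (flip SegmentsLE)) (hL' : L'.Pairwise (flip SegmentsLE))
    (hpos : ∀ p ∈ L, ∀ x ∈ p.1, 0 < x) (hpos' : ∀ p ∈ L', ∀ x ∈ p.1, 0 < x)
    (h : deltaSum L = deltaSum L') : L = L' := by
  induction L generalizing L' with
  | nil => exact (List.map_eq_nil_iff.mp hsnd.symm).symm
  | cons q L ih =>
    cases L' with
    | nil => simp at hsnd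
    | cons q' L' =>
      simp only [List.map_cons, List.cons.injEq] at hsnd
      simp only [List.pairwise_cons] at hL hL'
      simp only [List.mem_cons, forall_eq_or_imp] at hpos hpos'
      have hrow : ∀ m, q.1.getD m 0 = q'.1.getD m 0 := fun m => by
        rw [← maxLengthFrom_deltaSum_cons hL.1 m, ← maxLengthFrom_deltaSum_cons hL'.1 m, h,
          hsnd.1]
      have hqq' : q = q' := Prod.ext (eq_of_getD_eq hpos.1 hpos'.1 hrow) hsnd.1
      subst hqq'
      rw [ih hsnd.2 hL.2 hL'.2 hpos.2 hpos'.2 (by simpa [deltaSum] using h)]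

end Multisegment

open Multisegment

lemma Kleshchev.isChain_segmentsLE {is : List ℤ} {μs : List (List ℕ)}
    (hlen : μs.length = is.length) (hdec : is.Pairwise (· ≥ ·)) (hK : Kleshchev is μs) :
    (μs.zip is).IsChain SegmentsLE := by
  rw [List.isChain_iff_getElem]
  intro t ht
  replace ht : t + 1 < is.length := by simpa [hlen] using ht
  have hnext : is[t + 1] ≤ is[t] := List.pairwise_iff_getElem.mp hdec t (t + 1) _ ht (by omega)
  simp only [List.getElem_zip, SegmentsLE, maxLengthFrom_deltaList]
  refine ⟨hnext, fun b hb => ?_⟩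
  have := hK t (by omega) (is[t + 1] - b).toNat
  rw [List.getD_eq_getElem μs [] (show t < μs.length by omega),
    List.getD_eq_getElem μs [] (show t + 1 < μs.length by omega),
    List.getD_eq_getElem is 0 (show t < is.length by omega), List.getD_eq_getElem is 0 ht,
    show (is[t] - is[t + 1]).toNat + (is[t + 1] - b).toNat = (is[t] - b).toNat by omega] at this
  simpa [hb, hb.trans hnext] using this

/-- The map `(μ^{(1)}, …, μ^{(r)}) ↦ Δ(μ^{(1)}, i₁) ∪ ⋯ ∪ Δ(μ^{(r)}, i_r)` is injective
on Kleshchev multipartitions colored by `λ = Λ_{i₁} + ⋯ + Λ_{i_r}`, `i₁ ≥ ⋯ ≥ i_r`. -/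
theorem stmt14 (is : List ℤ) (μs νs : List (List ℕ))
    (hlen : μs.length = is.length) (hlen' : νs.length = is.length)
    (hdec : is.Pairwise (· ≥ ·))
    (hpart : ∀ μ ∈ μs, IsPartition μ) (hpart' : ∀ ν ∈ νs, IsPartition ν)
    (hK : Kleshchev is μs) (hK' : Kleshchev is νs)
    (h : DeltaMP is μs = DeltaMP is νs) : μs = νs := by
  have hzip : (μs.zip is).reverse = (νs.zip is).reverse := by
    refine eq_of_deltaSum_eq ?_
      (List.pairwise_reverse.mpr (hK.isChain_segmentsLE hlen hdec).pairwise)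
      (List.pairwise_reverse.mpr (hK'.isChain_segmentsLE hlen' hdec).pairwise)
      (fun p hp x hx => (hpart p.1 (List.of_mem_zip (List.mem_reverse.mp hp)).1).2 x hx)
      (fun p hp x hx => (hpart' p.1 (List.of_mem_zip (List.mem_reverse.mp hp)).1).2 x hx)
      (by rw [deltaSum_reverse, deltaSum_reverse]; exact h)
    simp [List.map_snd_zip, hlen, hlen']
  calc μs = (μs.zip is).map Prod.fst := (List.map_fst_zip hlen.le).symm
    _ = (νs.zip is).map Prod.fst := by rw [List.reverse_inj.mp hzip]
    _ = νs := List.map_fst_zip hlen'.le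
end
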